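/- Let w be an ω-word and L a language. Then every limit w' of the language {u ∈ L | u <_ℓ w} satisfies w' ≤_ℓ w, and every limit w' of the language {u ∈ L | w <_ℓ u} satisfies w ≤_ℓ w'. (This claim is used in the induction of the main theorem: no limit of L_{<w} can be strictly larger than w, and no limit of L_{>w} can be strictly smaller than w.) -/

import Mathlib

variable {α : Type*} [Fintype α] [LinearOrder α] [Nonempty α]

/-- `w↾n`, the length-`n` prefix of the ω-word `w`. -/
def restrict (w : ℕ → α) (n : ℕ) : List α := List.ofFn (fun i : Fin n => w i)

/-- `w` is a limit of `L`: every finite prefix of `w` is a proper prefix of some word of `L`. -/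
def blim (L : Set (List α)) : Set (ℕ → α) :=
  {w | ∀ n : ℕ, ∃ u ∈ L, restrict w n <+: u ∧ restrict w n ≠ u}

/-- `u <_ℓ w` for a word `u` and an ω-word `w`. -/
def wordLtOmega (u : List α) (w : ℕ → α) : Prop :=
  u = restrict w u.length ∨
    ∃ (i : ℕ) (h : i < u.length), u.take i = restrict w i ∧ u.get ⟨i, h⟩ < w i

/-- `w <_ℓ u` for an ω-word `w` and a word `u`. -/
def omegaLtWord (w : ℕ → α) (u : List α) : Prop :=
  ∃ (i : ℕ) (h : i < u.length), u.take i = restrict w i ∧ w i < u.get ⟨i, h⟩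

/-- `w <_ℓ w'` for ω-words. -/
def omegaLt (w w' : ℕ → α) : Prop :=
  ∃ n : ℕ, (∀ i < n, w i = w' i) ∧ w n < w' n

/-- `w ≤_ℓ w'` for ω-words. -/
def omegaLe (w w' : ℕ → α) : Prop := w = w' ∨ omegaLt w w'

/-- Concatenation `u·w` of a finite word and an ω-word. -/
def ocat (u : List α) (w : ℕ → α) : ℕ → α :=
  fun i => if h : i < u.length then u.get ⟨i, h⟩ else w (i - u.length)

/-- The strict order `u <_s v` on words. -/
def strictLt (u v : List α) : Prop :=
  ∃ (x y z : List α) (a b : α), a < b ∧ u = x ++ a :: y ∧ v = x ++ b :: z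

/-- `v^ω` for a nonempty word `v`. -/
def wpow (v : List α) (hv : v ≠ []) : ℕ → α :=
  fun i => v.get ⟨i % v.length, Nat.mod_lt _ (List.length_pos_iff.mpr hv)⟩

/-- `u^n`, the `n`-fold concatenation of the word `u` with itself. -/
def npow (u : List α) (n : ℕ) : List α := (List.replicate n u).flatten


lemma restrict_length (w : ℕ → α) (n : ℕ) : (restrict w n).length = n := by
  simp [restrict]

lemma getElem_restrict (w : ℕ → α) {n i : ℕ} (h : i < n) :
    (restrict w n)[i]'(by simp [restrict_length, h]) = w i := by
  simp [restrict]

lemma getElem_of_take_eq {u : List α} {w : ℕ → α} {i j : ℕ}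
    (h : u.take i = restrict w i) (hj : j < i) (hju : j < u.length) :
    u[j] = w j := by
  have hjt : j < (u.take i).length := by rw [h, restrict_length]; exact hj
  calc u[j] = (u.take i)[j] := ((List.take_prefix i u).getElem hjt).symm
    _ = (restrict w i)[j]'(by rw [restrict_length]; exact hj) :=
        List.getElem_of_eq h hjt
    _ = w j := getElem_restrict w hj

lemma getElem_of_prefix {u : List α} {w' : ℕ → α} {m j : ℕ}
    (hpre : restrict w' m <+: u) (hj : j < m) (hju : j < u.length) :
    u[j] = w' j := by
  have hjr : j < (restrict w' m).length := by rw [restrict_length]; exact hj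
  calc u[j] = (restrict w' m)[j] := (hpre.getElem hjr).symm
    _ = w' j := getElem_restrict w' hj

/-- no limit of `L_{<w}` exceeds `w` and no limit of `L_{>w}` is below `w`. -/
theorem stmt19 (w : ℕ → α) (L : Set (List α)) :
    (∀ w' ∈ blim {u ∈ L | wordLtOmega u w}, omegaLe w' w) ∧
    (∀ w' ∈ blim {u ∈ L | omegaLtWord w u}, omegaLe w w') := by
  constructor
  · intro w' hw'
    by_cases heq : w' = w
    · exact Or.inl heq
    · right
      have hne : ∃ n, w' n ≠ w n := by
        by_contra hc
        push_neg at hc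
        exact heq (funext hc)
      refine ⟨Nat.find hne, fun i hi => not_not.mp (Nat.find_min hne hi), ?_⟩
      set n := Nat.find hne with hn
      have hnn : w' n ≠ w n := Nat.find_spec hne
      rcases hnn.lt_or_gt with h | h
      · exact h
      · exfalso
        obtain ⟨u, ⟨huL, hult⟩, hpre, hneq⟩ := hw' (n + 1)
        have hlen : n + 1 ≤ u.length := by
          have := hpre.length_le
          rwa [restrict_length] at this
        have hun : u[n]'(by omega) = w' n :=
          getElem_of_prefix hpre (by omega) (by omega)
        rcases hult with h1 | ⟨i, hi, ht, hlt⟩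
        · have : u[n]'(by omega) = w n :=
            (List.getElem_of_eq h1 (by omega)).trans (getElem_restrict w (by omega))
          rw [hun] at this
          exact hnn this
        · simp only [List.get_eq_getElem] at hlt
          rcases lt_trichotomy i n with hin | hin | hin
          · have h2 : u[i] = w' i :=
              getElem_of_prefix hpre (by omega) hi
            have h3 : w' i = w i := not_not.mp (Nat.find_min hne hin)
            rw [h2, h3] at hlt
            exact lt_irrefl _ hlt
          · subst hin
            rw [hun] at hlt
            exact absurd (h.trans hlt) (lt_irrefl _)
          · have h2 : u[n]'(by omega) = w n :=
              getElem_of_take_eq ht hin (by omega)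
            rw [hun] at h2
            exact hnn h2
  · intro w' hw'
    by_cases heq : w = w'
    · exact Or.inl heq
    · right
      have hne : ∃ n, w n ≠ w' n := by
        by_contra hc
        push_neg at hc
        exact heq (funext hc)
      refine ⟨Nat.find hne, fun i hi => not_not.mp (Nat.find_min hne hi), ?_⟩
      set n := Nat.find hne with hn
      have hnn : w n ≠ w' n := Nat.find_spec hne
      rcases hnn.lt_or_gt with h | h
      · exact h
      · exfalso
        obtain ⟨u, ⟨huL, hult⟩, hpre, hneq⟩ := hw' (n + 1)
        have hlen : n + 1 ≤ u.length := by
          have := hpre.length_le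
          rwa [restrict_length] at this
        have hun : u[n]'(by omega) = w' n :=
          getElem_of_prefix hpre (by omega) (by omega)
        obtain ⟨i, hi, ht, hlt⟩ := hult
        simp only [List.get_eq_getElem] at hlt
        rcases lt_trichotomy i n with hin | hin | hin
        · have h2 : u[i] = w' i :=
            getElem_of_prefix hpre (by omega) hi
          have h3 : w i = w' i := not_not.mp (Nat.find_min hne hin)
          rw [h2, ← h3] at hlt
          exact lt_irrefl _ hlt
        · subst hin
          rw [hun] at hlt
          exact absurd (hlt.trans h) (lt_irrefl _)
        · have h2 : u[n]'(by omega) = w n :=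
            getElem_of_take_eq ht hin (by omega)
          rw [hun] at h2
          exact hnn h2.symm
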